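/- arXiv:2404.08278 — 5 statements merged into one kernel-verified Lean document; each statement's English description precedes it below -/
import Mathlib

section
/- Let (λ_i)_i be a nonincreasing summable sequence of nonnegative reals with λ_i ≤ C·i^{-β} for some β > 1 and C > 0. Then for all λ > 0, N₁(λ) := Σ_i λ_i/(λ_i + λ) ≤ C' · λ^{-1/β} for some constant C' depending only on C and β. -/
/-! Each term satisfies `λᵢ / (λᵢ + λ) ≤ min 1 ((C / λ) (i + 1)^(-β))`. Put `t = (C / λ)^(1/β)`.
If `t ≥ 1`, the first `⌈t⌉` terms contribute at most `t + 1`, and by the integral test the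
remaining ones contribute at most `t^β ⌈t⌉^(1-β) / (β - 1) ≤ t / (β - 1)`. If `t < 1`, split
after the first term instead and use `t^β ≤ t`. -/

open Real Set

theorem tsum_nat_add_rpow_neg_le {β : ℝ} (hβ : 1 < β) {N : ℕ} (hN : 0 < N) :
    ∑' i : ℕ, ((i + N + 1 : ℕ) : ℝ) ^ (-β) ≤ (N : ℝ) ^ (1 - β) / (β - 1) := by
  have hN' : (0 : ℝ) < N := by exact_mod_cast hN
  calc ∑' i : ℕ, ((i + N + 1 : ℕ) : ℝ) ^ (-β) ≤ ∫ x in Ioi (N : ℝ), x ^ (-β) :=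
        AntitoneOn.tsum_comp_add_le_integral N
          (fun x hx y _ hxy => rpow_le_rpow_of_nonpos (hN'.trans_le hx) hxy (by linarith))
          (integrableOn_Ioi_rpow_of_lt (by linarith) hN')
          (fun x hx => rpow_nonneg (hN'.trans hx).le _)
    _ = (N : ℝ) ^ (1 - β) / (β - 1) := by
        rw [integral_Ioi_rpow_of_lt (by linarith) hN', neg_div, ← div_neg]
        ring_nf

section EffectiveDimension

variable {l : ℕ → ℝ} {C β lam : ℝ}

theorem div_add_le_mul_rpow_neg (hnn : ∀ i, 0 ≤ l i)
    (hdecay : ∀ i : ℕ, l i ≤ C * ((i : ℝ) + 1) ^ (-β)) (hlam : 0 < lam) (i : ℕ) :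
    l i / (l i + lam) ≤ C / lam * ((i : ℝ) + 1) ^ (-β) :=
  calc l i / (l i + lam) ≤ l i / lam :=
        div_le_div_of_nonneg_left (hnn i) hlam (by linarith [hnn i])
    _ ≤ C * ((i : ℝ) + 1) ^ (-β) / lam := by gcongr; exact hdecay i
    _ = C / lam * ((i : ℝ) + 1) ^ (-β) := by ring

theorem tsum_div_add_le_sum_range_add (hβ : 1 < β) (hnn : ∀ i, 0 ≤ l i)
    (hdecay : ∀ i : ℕ, l i ≤ C * ((i : ℝ) + 1) ^ (-β)) (hlam : 0 < lam) {n : ℕ} (hn : 0 < n) :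
    ∑' i, l i / (l i + lam) ≤
      ∑ i ∈ Finset.range n, l i / (l i + lam) + C / lam * ((n : ℝ) ^ (1 - β) / (β - 1)) := by
  have hbound := div_add_le_mul_rpow_neg hnn hdecay hlam
  have hC : 0 ≤ C / lam := div_nonneg (by simpa using (hnn 0).trans (hdecay 0)) hlam.le
  have hrpow : Summable fun i : ℕ => ((i + n + 1 : ℕ) : ℝ) ^ (-β) :=
    (summable_nat_add_iff (n + 1)).2 (summable_nat_rpow.2 (by linarith))
  have htail : Summable fun i : ℕ => l (i + n) / (l (i + n) + lam) :=
    (hrpow.mul_left (C / lam)).of_nonneg_of_le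
      (fun i => div_nonneg (hnn _) (by linarith [hnn (i + n)]))
      (fun i => by simpa using hbound (i + n))
  have hsummable := (summable_nat_add_iff (f := fun i => l i / (l i + lam)) n).1 htail
  rw [← hsummable.sum_add_tsum_nat_add n]
  refine add_le_add_right ?_ _
  calc ∑' i, l (i + n) / (l (i + n) + lam)
      ≤ ∑' i : ℕ, C / lam * ((i + n + 1 : ℕ) : ℝ) ^ (-β) :=
        htail.tsum_le_tsum (fun i => by simpa using hbound (i + n)) (hrpow.mul_left _)
    _ ≤ C / lam * ((n : ℝ) ^ (1 - β) / (β - 1)) := by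
        rw [tsum_mul_left]
        exact mul_le_mul_of_nonneg_left (tsum_nat_add_rpow_neg_le hβ hn) hC

theorem tsum_div_add_le_rpow (hβ : 1 < β) (hnn : ∀ i, 0 ≤ l i)
    (hdecay : ∀ i : ℕ, l i ≤ C * ((i : ℝ) + 1) ^ (-β)) (hlam : 0 < lam) :
    ∑' i, l i / (l i + lam) ≤ (C / lam) ^ (1 / β) * (2 + 1 / (β - 1)) := by
  have hCl : 0 ≤ C / lam := div_nonneg (by simpa using (hnn 0).trans (hdecay 0)) hlam.le
  set t := (C / lam) ^ (1 / β) with ht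
  have ht0 : 0 ≤ t := rpow_nonneg hCl _
  have htβ : C / lam = t ^ β := by
    rw [ht, ← rpow_mul hCl, one_div_mul_cancel (by positivity), rpow_one]
  have hb : 0 < 1 / (β - 1) := one_div_pos.2 (by linarith)
  rcases le_or_gt 1 t with h1 | h1
  · set n := ⌈t⌉₊
    have hn : 0 < n := Nat.ceil_pos.2 (by linarith)
    have htn : t ≤ n := Nat.le_ceil t
    have hhead : ∑ i ∈ Finset.range n, l i / (l i + lam) ≤ t + 1 := by
      calc ∑ i ∈ Finset.range n, l i / (l i + lam) ≤ ∑ _i ∈ Finset.range n, (1 : ℝ) := by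
            refine Finset.sum_le_sum fun i _ => div_le_one_of_le₀ ?_ ?_ <;> linarith [hnn i]
        _ ≤ t + 1 := by simpa using (Nat.ceil_lt_add_one ht0).le
    have htail : C / lam * ((n : ℝ) ^ (1 - β) / (β - 1)) ≤ t / (β - 1) := by
      rw [htβ, mul_div_assoc']
      refine div_le_div_of_nonneg_right ?_ (by linarith)
      calc t ^ β * (n : ℝ) ^ (1 - β) ≤ t ^ β * t ^ (1 - β) :=
            mul_le_mul_of_nonneg_left (rpow_le_rpow_of_nonpos (by linarith) htn (by linarith))
              (rpow_nonneg ht0 _)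
        _ = t := by rw [← rpow_add (by linarith), add_sub_cancel, rpow_one]
    have hsplit := tsum_div_add_le_sum_range_add hβ hnn hdecay hlam hn
    rw [div_eq_mul_one_div t] at htail
    linarith
  · have htβt : t ^ β ≤ t := rpow_le_self_of_le_one ht0 h1.le hβ.le
    have hhead : l 0 / (l 0 + lam) ≤ t :=
      calc l 0 / (l 0 + lam) ≤ C / lam * (((0 : ℕ) : ℝ) + 1) ^ (-β) :=
            div_add_le_mul_rpow_neg hnn hdecay hlam 0
        _ = t ^ β := by simp [htβ]
        _ ≤ t := htβt
    have hsplit := tsum_div_add_le_sum_range_add hβ hnn hdecay hlam one_pos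
    simp only [Finset.sum_range_one, Nat.cast_one, one_rpow] at hsplit
    rw [htβ] at hsplit
    linarith [mul_le_mul_of_nonneg_right htβt hb.le]

end EffectiveDimension

theorem stmt_2_general (l : ℕ → ℝ) (C β : ℝ) (hβ : 1 < β) (hC : 0 < C)
    (hnn : ∀ i, 0 ≤ l i)
    (hdecay : ∀ i : ℕ, l i ≤ C * ((i : ℝ) + 1) ^ (-β)) :
    ∃ C' > 0, ∀ lam : ℝ, 0 < lam →
      ∑' i, l i / (l i + lam) ≤ C' * lam ^ (-(1 / β)) := by
  refine ⟨C ^ (1 / β) * (2 + 1 / (β - 1)), by positivity, fun lam hlam => ?_⟩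
  calc ∑' i, l i / (l i + lam) ≤ (C / lam) ^ (1 / β) * (2 + 1 / (β - 1)) :=
        tsum_div_add_le_rpow hβ hnn hdecay hlam
    _ = C ^ (1 / β) * (2 + 1 / (β - 1)) * lam ^ (-(1 / β)) := by
        rw [div_rpow hC.le hlam.le, rpow_neg hlam.le]
        ring

/-- If (λ_i) is a nonincreasing summable sequence of nonnegative reals with
λ_i ≤ C·i^{-β} (indices starting from 1, i.e. λ_i ≤ C·(i+1)^{-β} for i : ℕ), β > 1, C > 0,
then for all λ > 0, N₁(λ) = Σ_i λ_i/(λ_i+λ) ≤ C'·λ^{-1/β} for some C' depending on C, β. -/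
theorem stmt_2 (l : ℕ → ℝ) (C β : ℝ) (hβ : 1 < β) (hC : 0 < C)
    (hnn : ∀ i, 0 ≤ l i) (hmono : ∀ i j, i ≤ j → l j ≤ l i)
    (hsum : Summable l)
    (hdecay : ∀ i : ℕ, l i ≤ C * ((i : ℝ) + 1) ^ (-β)) :
    ∃ C' > 0, ∀ lam : ℝ, 0 < lam →
      ∑' i, l i / (l i + lam) ≤ C' * lam ^ (-(1 / β)) :=
  stmt_2_general l C β hβ hC hnn hdecay
end

section
/- Let A and Â be positive self-adjoint bounded operators on a Hilbert space H with λ > 0, and set B_n := (A+λI)^{-1/2}(A − Â)(A+λI)^{-1/2}. If ‖B_n‖_{op} ≤ 1/2, then ‖(A+λI)^{1/2}(Â+λI)^{-1/2}‖_{op} ≤ √2 and ‖(A+λI)^{-1/2}(Â+λI)^{1/2}‖_{op} ≤ √(3/2). -/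
open RealInnerProductSpace

lemma opNorm_le_sqrt_aux {H : Type*} [NormedAddCommGroup H] [InnerProductSpace ℝ H]
    (T : H →L[ℝ] H) (c : ℝ) (hc : 0 ≤ c) (h : ∀ x, ‖T x‖ ^ 2 ≤ c * ‖x‖ ^ 2) :
    ‖T‖ ≤ Real.sqrt c := by
  refine T.opNorm_le_bound (Real.sqrt_nonneg c) fun x => ?_
  have h1 : ‖T x‖ = Real.sqrt (‖T x‖ ^ 2) := (Real.sqrt_sq (norm_nonneg _)).symm
  rw [h1]
  calc Real.sqrt (‖T x‖ ^ 2) ≤ Real.sqrt (c * ‖x‖ ^ 2) := Real.sqrt_le_sqrt (h x)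
    _ = Real.sqrt c * ‖x‖ := by
        rw [Real.sqrt_mul hc, Real.sqrt_sq (norm_nonneg _)]

/-- Let A, Â be positive self-adjoint bounded operators on a Hilbert space, λ > 0,
R the positive square root of A+λI with inverse Rinv, S the positive square root of Â+λI with
inverse Sinv, and B_n := Rinv (A − Â) Rinv. If ‖B_n‖ ≤ 1/2 then
‖(A+λI)^{1/2}(Â+λI)^{-1/2}‖ ≤ √2 and ‖(A+λI)^{-1/2}(Â+λI)^{1/2}‖ ≤ √(3/2). -/
theorem stmt_6 {H : Type*} [NormedAddCommGroup H] [InnerProductSpace ℝ H] [CompleteSpace H]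
    (lam : ℝ) (hlam : 0 < lam)
    (A Ahat R Rinv S Sinv : H →L[ℝ] H)
    (hAsa : IsSelfAdjoint A) (hAhatsa : IsSelfAdjoint Ahat)
    (hApos : ∀ x, 0 ≤ ⟪A x, x⟫) (hAhatpos : ∀ x, 0 ≤ ⟪Ahat x, x⟫)
    (hRsa : IsSelfAdjoint R) (hSsa : IsSelfAdjoint S)
    (hRpos : ∀ x, 0 ≤ ⟪R x, x⟫) (hSpos : ∀ x, 0 ≤ ⟪S x, x⟫)
    (hRinvsa : IsSelfAdjoint Rinv) (hSinvsa : IsSelfAdjoint Sinv)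
    (hR2 : R ∘L R = A + lam • 1) (hS2 : S ∘L S = Ahat + lam • 1)
    (hRinv : R ∘L Rinv = 1) (hRinv' : Rinv ∘L R = 1)
    (hSinv : S ∘L Sinv = 1) (hSinv' : Sinv ∘L S = 1)
    (hB : ‖Rinv ∘L (A - Ahat) ∘L Rinv‖ ≤ 1 / 2) :
    ‖R ∘L Sinv‖ ≤ Real.sqrt 2 ∧ ‖Rinv ∘L S‖ ≤ Real.sqrt (3 / 2) := by
  set B : H →L[ℝ] H := Rinv ∘L (A - Ahat) ∘L Rinv with hBdef
  have hRsym : ∀ a b : H, ⟪R a, b⟫ = ⟪a, R b⟫ := fun a b => hRsa.isSymmetric a b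
  have hSsym : ∀ a b : H, ⟪S a, b⟫ = ⟪a, S b⟫ := fun a b => hSsa.isSymmetric a b
  have hRinvsym : ∀ a b : H, ⟪Rinv a, b⟫ = ⟪a, Rinv b⟫ := fun a b => hRinvsa.isSymmetric a b
  have hRRinv : ∀ v : H, R (Rinv v) = v := fun v => by
    have := congrArg (fun T : H →L[ℝ] H => T v) hRinv; simpa using this
  have hRinvR : ∀ v : H, Rinv (R v) = v := fun v => by
    have := congrArg (fun T : H →L[ℝ] H => T v) hRinv'; simpa using this
  have hSSinv : ∀ v : H, S (Sinv v) = v := fun v => by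
    have := congrArg (fun T : H →L[ℝ] H => T v) hSinv; simpa using this
  -- pointwise: (A - Ahat) v = R (B (R v))
  have hdiff : ∀ v : H, (A - Ahat) v = R (B (R v)) := fun v => by
    have h1 : B (R v) = Rinv ((A - Ahat) v) := by
      simp [hBdef, ContinuousLinearMap.comp_apply, hRinvR v]
    rw [h1, hRRinv]
  -- inner ⟪u, B u⟫ bound
  have hBbound : ∀ u : H, |⟪u, B u⟫| ≤ (1 / 2) * ‖u‖ ^ 2 := fun u => by
    calc |⟪u, B u⟫| ≤ ‖u‖ * ‖B u‖ := abs_real_inner_le_norm _ _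
      _ ≤ ‖u‖ * (‖B‖ * ‖u‖) := by gcongr; exact B.le_opNorm u
      _ ≤ ‖u‖ * ((1 / 2) * ‖u‖) := by gcongr
      _ = (1 / 2) * ‖u‖ ^ 2 := by ring
  constructor
  · -- ‖R ∘L Sinv‖ ≤ √2
    apply opNorm_le_sqrt_aux _ 2 (by norm_num)
    intro x
    set y := R (Sinv x) with hy
    have key : ‖y‖ ^ 2 = ‖x‖ ^ 2 + ⟪y, B y⟫ := by
      have e1 : (‖y‖ : ℝ) ^ 2 = ⟪y, y⟫ := (real_inner_self_eq_norm_sq y).symm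
      have e2 : ⟪y, y⟫ = ⟪Sinv x, R (R (Sinv x))⟫ := hRsym (Sinv x) (R (Sinv x))
      have e3 : R (R (Sinv x)) = A (Sinv x) + lam • (Sinv x) := by
        have := congrArg (fun T : H →L[ℝ] H => T (Sinv x)) hR2
        simpa using this
      have e5 : A (Sinv x) + lam • (Sinv x) = S (S (Sinv x)) + (A - Ahat) (Sinv x) := by
        have := congrArg (fun T : H →L[ℝ] H => T (Sinv x)) hS2
        simp only [ContinuousLinearMap.comp_apply, ContinuousLinearMap.add_apply,
          ContinuousLinearMap.smul_apply, ContinuousLinearMap.one_apply] at this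
        rw [this]
        simp [ContinuousLinearMap.sub_apply]
        abel
      have e8 : ⟪Sinv x, S x⟫ = ‖x‖ ^ 2 := by
        rw [← hSsym (Sinv x) x, hSSinv x]
        exact real_inner_self_eq_norm_sq x
      have e9 : ⟪Sinv x, R (B y)⟫ = ⟪y, B y⟫ := (hRsym (Sinv x) (B y)).symm
      rw [e1, e2, e3, e5, hSSinv x, hdiff (Sinv x), ← hy, inner_add_right, e8, e9]
    have h2 : ‖y‖ ^ 2 ≤ ‖x‖ ^ 2 + (1 / 2) * ‖y‖ ^ 2 := by
      rw [key]
      have := (abs_le.mp (hBbound y)).2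
      linarith
    have hny : ‖(R ∘L Sinv) x‖ = ‖y‖ := by rw [hy]; rfl
    rw [hny]
    linarith
  · -- ‖Rinv ∘L S‖ ≤ √(3/2)
    have hflip : ‖Rinv ∘L S‖ = ‖S ∘L Rinv‖ := by
      have he : Rinv ∘L S = ContinuousLinearMap.adjoint (S ∘L Rinv) := by
        rw [ContinuousLinearMap.adjoint_comp, ← ContinuousLinearMap.star_eq_adjoint,
          ← ContinuousLinearMap.star_eq_adjoint, hRinvsa.star_eq, hSsa.star_eq]
      rw [he]
      exact (ContinuousLinearMap.adjoint : (H →L[ℝ] H) ≃ₗᵢ⋆[ℝ] H →L[ℝ] H).norm_map _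
    rw [hflip]
    apply opNorm_le_sqrt_aux _ (3 / 2) (by norm_num)
    intro x
    have e1 : ‖(S ∘L Rinv) x‖ ^ 2 = ⟪S (Rinv x), S (Rinv x)⟫ := by
      rw [ContinuousLinearMap.comp_apply, ← real_inner_self_eq_norm_sq]
    have e2 : ⟪S (Rinv x), S (Rinv x)⟫ = ⟪Rinv x, S (S (Rinv x))⟫ := hSsym _ _
    have e3 : S (S (Rinv x)) = R (R (Rinv x)) - (A - Ahat) (Rinv x) := by
      have h1 := congrArg (fun T : H →L[ℝ] H => T (Rinv x)) hS2
      have h2 := congrArg (fun T : H →L[ℝ] H => T (Rinv x)) hR2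
      simp only [ContinuousLinearMap.comp_apply, ContinuousLinearMap.add_apply,
        ContinuousLinearMap.smul_apply, ContinuousLinearMap.one_apply] at h1 h2
      rw [h1, h2]
      simp [ContinuousLinearMap.sub_apply]
      abel
    have e7 : ⟪Rinv x, R x⟫ = ‖x‖ ^ 2 := by
      rw [hRinvsym x (R x), hRinvR x]
      exact real_inner_self_eq_norm_sq x
    have e8 : ⟪Rinv x, (A - Ahat) (Rinv x)⟫ = ⟪x, B x⟫ := by
      have hw : B x = Rinv ((A - Ahat) (Rinv x)) := by
        simp [hBdef, ContinuousLinearMap.comp_apply]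
      rw [hw, ← hRinvsym x ((A - Ahat) (Rinv x))]
    have key : ‖(S ∘L Rinv) x‖ ^ 2 = ‖x‖ ^ 2 - ⟪x, B x⟫ := by
      rw [e1, e2, e3, hRRinv x, inner_sub_right, e7, e8]
    rw [key]
    have := (abs_le.mp (hBbound x)).1
    linarith
end

section
/- Let (λ_i)_i be positive reals with λ_i > 0, and let (φ̃_i)_i be an orthonormal system in L²(P₀) with g_λ a spectral regularizer. For u ∈ L²(P₀) with u = Σ_i λ_i^θ ⟨f, φ̃_i⟩ φ̃_i for some f ∈ L²(P₀) (i.e., u ∈ Ran(Υ^θ)), define D²_λ := Σ_i λ_i g_λ(λ_i) ⟨u, φ̃_i⟩². If g_λ satisfies x g_λ(x) ≥ B₃ − δ_λ(x) with sup_{x: xg_λ(x)<B₃} (B₃ − x g_λ(x)) x^{2θ} ≤ C₃ λ^{2θ}, and ‖u‖²_{L²(P₀)} ≥ (2C₃/B₃) λ^{2θ} ‖f‖²_{L²(P₀)}, then Σ_i λ_i g_λ(λ_i) ⟨u, φ̃_i⟩² ≥ (B₃/2) ‖u‖²_{L²(P₀)}. -/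
open RealInnerProductSpace

/-- With eigenvalues λ_i > 0 and orthonormal eigenfunctions φ̃_i in L²(P₀),
if u = Σ_i λ_i^θ ⟨f, φ̃_i⟩ φ̃_i (i.e. u ∈ Ran(Υ^θ)), g_λ satisfies
sup_{x : x g_λ(x) < B₃} (B₃ − x g_λ(x)) x^{2θ} ≤ C₃ λ^{2θ}, and
‖u‖² ≥ (2C₃/B₃) λ^{2θ} ‖f‖², then D²_λ = Σ_i λ_i g_λ(λ_i) ⟨u, φ̃_i⟩² ≥ (B₃/2)‖u‖². -/
theorem stmt_8 {H : Type*} [NormedAddCommGroup H] [InnerProductSpace ℝ H] [CompleteSpace H]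
    (φ : ℕ → H) (hφ : Orthonormal ℝ φ)
    (l : ℕ → ℝ) (hl : ∀ i, 0 < l i)
    (g : ℝ → ℝ) (lam θ B₃ C₃ : ℝ)
    (hlam : 0 < lam) (hθ : 0 < θ) (hB₃ : 0 < B₃) (hC₃ : 0 < C₃)
    (u f : H)
    (hu : HasSum (fun i => (l i ^ θ * ⟪f, φ i⟫) • φ i) u)
    (hE3 : ∀ i, l i * g (l i) < B₃ →
      (B₃ - l i * g (l i)) * l i ^ (2 * θ) ≤ C₃ * lam ^ (2 * θ))
    (hsep : ‖u‖ ^ 2 ≥ (2 * C₃ / B₃) * lam ^ (2 * θ) * ‖f‖ ^ 2)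
    (hsum : Summable (fun i => l i * g (l i) * ⟪u, φ i⟫ ^ 2)) :
    ∑' i, l i * g (l i) * ⟪u, φ i⟫ ^ 2 ≥ (B₃ / 2) * ‖u‖ ^ 2 := by
  have hite := orthonormal_iff_ite.mp hφ
  -- coefficients
  have hc : ∀ i, ⟪u, φ i⟫ = l i ^ θ * ⟪f, φ i⟫ := by
    intro i
    have h1 := (innerSL ℝ (φ i)).hasSum hu
    simp only [innerSL_apply_apply, inner_smul_right, hite] at h1
    have h2 : HasSum (fun j => if i = j then l j ^ θ * ⟪f, φ j⟫ else 0)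
        (l i ^ θ * ⟪f, φ i⟫) := by
      convert hasSum_ite_eq i (l i ^ θ * ⟪f, φ i⟫) using 2 with j
      by_cases h : i = j <;> simp [h, eq_comm]
    have := h1.unique (by simpa [mul_ite] using h2)
    rw [real_inner_comm]
    simpa using this
  -- Parseval for u
  have hP : HasSum (fun i => ⟪u, φ i⟫ ^ 2) (‖u‖ ^ 2) := by
    have h1 := (innerSL ℝ u).hasSum hu
    simp only [innerSL_apply_apply, inner_smul_right] at h1
    have : ∀ i, l i ^ θ * ⟪f, φ i⟫ * ⟪u, φ i⟫ = ⟪u, φ i⟫ ^ 2 := by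
      intro i; rw [← hc i]; ring
    rw [← real_inner_self_eq_norm_sq]
    refine HasSum.congr_fun ?_ (fun i => (this i).symm)
    simpa [real_inner_comm] using h1
  -- square relation
  have hsq : ∀ i, ⟪u, φ i⟫ ^ 2 = l i ^ (2 * θ) * ⟪f, φ i⟫ ^ 2 := by
    intro i
    rw [hc i, mul_pow, ← Real.rpow_natCast (l i ^ θ) 2, ← Real.rpow_mul (hl i).le]
    norm_num [mul_comm]
  have hfs : Summable (fun i => ⟪f, φ i⟫ ^ 2) := by
    have := hφ.inner_products_summable (x := f)
    simpa [real_inner_comm, sq_abs] using this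
  have hfle : ∑' i, ⟪f, φ i⟫ ^ 2 ≤ ‖f‖ ^ 2 := by
    have := hφ.tsum_inner_products_le (x := f)
    simpa [real_inner_comm, sq_abs] using this
  have hlamθ : (0:ℝ) < lam ^ (2 * θ) := Real.rpow_pos_of_pos hlam _
  -- pointwise lower bound
  have hpt : ∀ i, B₃ * ⟪u, φ i⟫ ^ 2 - C₃ * lam ^ (2 * θ) * ⟪f, φ i⟫ ^ 2
      ≤ l i * g (l i) * ⟪u, φ i⟫ ^ 2 := by
    intro i
    by_cases h : l i * g (l i) < B₃
    · have h1 := hE3 i h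
      have h2 : (B₃ - l i * g (l i)) * ⟪u, φ i⟫ ^ 2
          ≤ C₃ * lam ^ (2 * θ) * ⟪f, φ i⟫ ^ 2 := by
        rw [hsq i, ← mul_assoc]
        exact mul_le_mul_of_nonneg_right h1 (sq_nonneg _)
      nlinarith [sq_nonneg (⟪u, φ i⟫)]
    · push_neg at h
      nlinarith [sq_nonneg (⟪u, φ i⟫), sq_nonneg (⟪f, φ i⟫),
        mul_le_mul_of_nonneg_right h (sq_nonneg (⟪u, φ i⟫)),
        mul_pos hC₃ hlamθ]
  -- sum the bound
  have hsum2 : Summable (fun i => B₃ * ⟪u, φ i⟫ ^ 2 - C₃ * lam ^ (2 * θ) * ⟪f, φ i⟫ ^ 2) :=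
    ((hP.summable.mul_left _).sub (hfs.mul_left _))
  have hT := Summable.tsum_le_tsum hpt hsum2 hsum
  have hTl : ∑' i, (B₃ * ⟪u, φ i⟫ ^ 2 - C₃ * lam ^ (2 * θ) * ⟪f, φ i⟫ ^ 2)
      = B₃ * ‖u‖ ^ 2 - C₃ * lam ^ (2 * θ) * ∑' i, ⟪f, φ i⟫ ^ 2 := by
    rw [Summable.tsum_sub (hP.summable.mul_left _) (hfs.mul_left _), tsum_mul_left, tsum_mul_left,
      hP.tsum_eq]
  rw [hTl] at hT
  have hfin : C₃ * lam ^ (2 * θ) * ‖f‖ ^ 2 ≤ (B₃ / 2) * ‖u‖ ^ 2 := by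
    have := mul_le_mul_of_nonneg_left hsep (by positivity : (0:ℝ) ≤ B₃ / 2)
    calc C₃ * lam ^ (2 * θ) * ‖f‖ ^ 2
        = (B₃ / 2) * ((2 * C₃ / B₃) * lam ^ (2 * θ) * ‖f‖ ^ 2) := by field_simp
      _ ≤ (B₃ / 2) * ‖u‖ ^ 2 := this
  have hmono : C₃ * lam ^ (2 * θ) * ∑' i, ⟪f, φ i⟫ ^ 2 ≤ C₃ * lam ^ (2 * θ) * ‖f‖ ^ 2 :=
    mul_le_mul_of_nonneg_left hfle (by positivity)
  linarith
end

section
/- Let H be an RKHS with measurable kernel K on X satisfying ∫ K(x,x) dP(x) < ∞. Define the covariance operator A_P := ∫ K(·,x) ⊗ K(·,x) dP(x) on H. Then A_P is a positive, self-adjoint, trace-class operator with Tr(A_P) = ∫ K(x,x) dP(x). -/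
open RealInnerProductSpace MeasureTheory

section aux

open Function in
/-- Auxiliary: the support of the basis coefficients of any vector is countable. -/
lemma aux_countable_support {H : Type*} [NormedAddCommGroup H] [InnerProductSpace ℝ H]
    [CompleteSpace H] {ι : Type*} (e : HilbertBasis ι ℝ H) (y : H) :
    (support fun i => ⟪(e i : H), y⟫).Countable := by
  have hs : Summable fun i => ⟪y, (e i : H)⟫ * ⟪(e i : H), y⟫ :=
    e.summable_inner_mul_inner y y
  have := hs.countable_support
  refine this.mono ?_
  intro i hi
  simp only [mem_support] at hi ⊢
  exact mul_ne_zero (by rwa [real_inner_comm]) hi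

end aux

/-- Let H be an RKHS on X with feature map Φ (so K(x,y) = ⟪Φ x, Φ y⟫ and
f(x) = ⟪f, Φ x⟫), P a probability measure with ∫ K(x,x) dP < ∞, and A_P the covariance
operator, characterized weakly by ⟪A f, g⟫ = ∫ f(x) g(x) dP(x). Then A_P is positive,
self-adjoint, and trace-class with Tr(A_P) = ∫ K(x,x) dP(x) (the trace being computed in
any Hilbert basis). -/
theorem stmt_10 {X : Type*} [MeasurableSpace X] (P : Measure X) [IsProbabilityMeasure P]
    {H : Type*} [NormedAddCommGroup H] [InnerProductSpace ℝ H] [CompleteSpace H]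
    (Φ : X → H)
    (hmeas : AEStronglyMeasurable Φ P)
    (hint : Integrable (fun x => ⟪Φ x, Φ x⟫) P)
    (A : H →L[ℝ] H)
    (hA : ∀ f g : H, ⟪A f, g⟫ = ∫ x, ⟪f, Φ x⟫ * ⟪g, Φ x⟫ ∂P) :
    (∀ f, 0 ≤ ⟪A f, f⟫) ∧
    (∀ f g, ⟪A f, g⟫ = ⟪f, A g⟫) ∧
    (∀ (ι : Type) (e : HilbertBasis ι ℝ H),
      HasSum (fun i => ⟪A (e i), e i⟫) (∫ x, ⟪Φ x, Φ x⟫ ∂P)) := by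
  have hmeasf : ∀ f : H, AEStronglyMeasurable (fun x => ⟪f, Φ x⟫ * ⟪f, Φ x⟫) P := by
    intro f
    exact ((aestronglyMeasurable_const.inner hmeas).mul
      (aestronglyMeasurable_const.inner hmeas))
  have hintf : ∀ f : H, ‖f‖ ≤ 1 → Integrable (fun x => ⟪f, Φ x⟫ * ⟪f, Φ x⟫) P := by
    intro f hf
    refine hint.mono' (hmeasf f) ?_
    filter_upwards with x
    have h1 : |⟪f, Φ x⟫| ≤ ‖Φ x‖ := by
      calc |⟪f, Φ x⟫| ≤ ‖f‖ * ‖Φ x‖ := abs_real_inner_le_norm f (Φ x)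
        _ ≤ 1 * ‖Φ x‖ := by gcongr
        _ = ‖Φ x‖ := one_mul _
    have h2 : ⟪f, Φ x⟫ * ⟪f, Φ x⟫ ≤ ‖Φ x‖ * ‖Φ x‖ := by
      calc ⟪f, Φ x⟫ * ⟪f, Φ x⟫ = |⟪f, Φ x⟫| * |⟪f, Φ x⟫| := (abs_mul_abs_self _).symm
        _ ≤ ‖Φ x‖ * ‖Φ x‖ := mul_le_mul h1 h1 (abs_nonneg _) (norm_nonneg _)
    rw [Real.norm_eq_abs, abs_mul_self, real_inner_self_eq_norm_mul_norm]
    exact h2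
  refine ⟨?_, ?_, ?_⟩
  · intro f
    rw [hA]
    exact integral_nonneg fun x => mul_self_nonneg _
  · intro f g
    rw [real_inner_comm (A g) f, hA, hA]
    simp_rw [mul_comm]
  · intro ι e
    -- pointwise Parseval
    have hpt : ∀ x, HasSum (fun i => ⟪(e i : H), Φ x⟫ * ⟪(e i : H), Φ x⟫) ⟪Φ x, Φ x⟫ := by
      intro x
      have := e.hasSum_inner_mul_inner (Φ x) (Φ x)
      simpa [real_inner_comm] using this
    have hinti : ∀ i, Integrable (fun x => ⟪(e i : H), Φ x⟫ * ⟪(e i : H), Φ x⟫) P :=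
      fun i => hintf _ (le_of_eq (e.orthonormal.1 i))
    -- separability: Φ takes values a.e. in a separable set
    obtain ⟨t, htsep, htae⟩ := hmeas.isSeparable_ae_range
    obtain ⟨c, hc_count, hc_sub⟩ := htsep
    -- the countable set of relevant indices
    set J : Set ι := ⋃ y ∈ c, Function.support (fun i => ⟪(e i : H), y⟫) with hJ
    have hJc : J.Countable := hc_count.biUnion fun y _ => aux_countable_support e y
    haveI : Countable J := hJc.to_subtype
    -- vanishing off J
    have hvanish : ∀ x, Φ x ∈ t → ∀ i, i ∉ J → ⟪(e i : H), Φ x⟫ = 0 := by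
      intro x hx i hi
      have hzero : ∀ y ∈ c, ⟪(e i : H), y⟫ = 0 := by
        intro y hy
        by_contra h
        exact hi (Set.mem_biUnion hy h)
      have hclosed : IsClosed {z : H | ⟪(e i : H), z⟫ = 0} :=
        isClosed_eq (continuous_const.inner continuous_id) continuous_const
      have hsub : closure c ⊆ {z : H | ⟪(e i : H), z⟫ = 0} :=
        hclosed.closure_subset_iff.mpr hzero
      exact hsub (hc_sub hx)
    set a : ι → ℝ := fun i => ∫ x, ⟪(e i : H), Φ x⟫ * ⟪(e i : H), Φ x⟫ ∂P with ha
    have ha_nonneg : ∀ i, 0 ≤ a i := fun i => integral_nonneg fun x => mul_self_nonneg _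
    have hI_nonneg : (0:ℝ) ≤ ∫ x, ⟪Φ x, Φ x⟫ ∂P :=
      integral_nonneg fun x => real_inner_self_nonneg
    -- a vanishes off J
    have ha_supp : Function.support a ⊆ J := by
      intro i hi
      by_contra h
      apply hi
      rw [ha]
      have : (fun x => ⟪(e i : H), Φ x⟫ * ⟪(e i : H), Φ x⟫) =ᵐ[P] (fun _ => (0:ℝ)) := by
        filter_upwards [htae] with x hx
        rw [hvanish x hx i h, mul_zero]
      simp only
      rw [integral_congr_ae this, integral_zero]
    -- key ENNReal computation, over the countable set J
    have key : ∑' j : J, ENNReal.ofReal (a j) = ENNReal.ofReal (∫ x, ⟪Φ x, Φ x⟫ ∂P) := by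
      have h1 : ∀ j : J, ENNReal.ofReal (a j)
          = ∫⁻ x, ENNReal.ofReal (⟪(e j : H), Φ x⟫ * ⟪(e j : H), Φ x⟫) ∂P := fun j =>
        ofReal_integral_eq_lintegral_ofReal (hinti j)
          (Filter.Eventually.of_forall fun x => mul_self_nonneg _)
      simp_rw [h1]
      rw [← lintegral_tsum fun j : J => ((hmeasf (e j)).aemeasurable).ennreal_ofReal]
      rw [ofReal_integral_eq_lintegral_ofReal hint
        (Filter.Eventually.of_forall fun x => real_inner_self_nonneg)]
      refine lintegral_congr_ae ?_
      filter_upwards [htae] with x hx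
      have hsupp : Function.support (fun i => ⟪(e i : H), Φ x⟫ * ⟪(e i : H), Φ x⟫) ⊆ J := by
        intro i hi
        simp only [Function.mem_support] at hi
        by_contra h
        exact hi (by rw [hvanish x hx i h, mul_zero])
      have hJx : HasSum (fun j : J => ⟪(e j : H), Φ x⟫ * ⟪(e j : H), Φ x⟫) ⟪Φ x, Φ x⟫ :=
        (hasSum_subtype_iff_of_support_subset hsupp).mpr (hpt x)
      rw [← ENNReal.ofReal_tsum_of_nonneg (fun j => mul_self_nonneg _) hJx.summable,
        hJx.tsum_eq]
    have hne : ∀ j : J, ENNReal.ofReal (a j) ≠ ⊤ := fun j => ENNReal.ofReal_ne_top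
    have hsum_ne : ∑' j : J, ENNReal.ofReal (a j) ≠ ⊤ := by
      rw [key]; exact ENNReal.ofReal_ne_top
    have hsummable : Summable fun j : J => a j := by
      have := ENNReal.summable_toReal hsum_ne
      exact this.congr fun j => ENNReal.toReal_ofReal (ha_nonneg j)
    have htsum : ∑' j : J, a j = ∫ x, ⟪Φ x, Φ x⟫ ∂P := by
      have := congrArg ENNReal.toReal key
      rw [ENNReal.tsum_toReal_eq hne, ENNReal.toReal_ofReal hI_nonneg] at this
      simpa [ENNReal.toReal_ofReal, ha_nonneg] using this
    have hJsum : HasSum (fun j : J => a j) (∫ x, ⟪Φ x, Φ x⟫ ∂P) :=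
      htsum ▸ hsummable.hasSum
    have hsum : HasSum a (∫ x, ⟪Φ x, Φ x⟫ ∂P) :=
      (hasSum_subtype_iff_of_support_subset ha_supp).mp hJsum
    refine hsum.congr_fun fun i => ?_
    rw [hA]
end

section
/- Let H be an RKHS on X with kernel K, P₀ a probability measure with ∫ K(x,x) dP₀(x) < ∞, and let J : H → L²(P₀) be the inclusion f ↦ [f]. Let P ≪ P₀ with density dP/dP₀ = 1 + u where u ∈ L²(P₀), and suppose E_{P₀}[K(·,X)] = 0 in H. Then the mean embedding Ψ_P := ∫ K(·,x) dP(x) satisfies Ψ_P = J*u, and consequently ‖Ψ_P‖²_H = ⟨Υ u, u⟩_{L²(P₀)} = Σ_i λ_i ⟨u, φ̃_i⟩²_{L²(P₀)}, where Υ = J J* has eigenpairs (λ_i, φ̃_i). -/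
/-!
Reweighting by the density `1 + u` and using `E_{P₀} Φ = 0` gives `Ψ_P = ∫ u • Φ dP₀`, and pairing
with `f ∈ H` shows this is `J* u`, since `⟪f, J* u⟫ = ⟪J f, u⟫ = ∫ ⟪f, Φ x⟫ u x dP₀`. Then
`‖J* u‖² = ⟪J J* u, u⟫`, and expanding `u` along the eigenvectors of `Υ = J J*` (whose orthogonal
complement `Υ` kills) gives the series.
-/

open RealInnerProductSpace MeasureTheory

section WithDensity

variable {X E : Type*} [MeasurableSpace X] {μ : Measure X}
  [NormedAddCommGroup E] [NormedSpace ℝ E]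

theorem integral_withDensity_ofReal_eq_integral_smul {f : X → ℝ} (hf : AEMeasurable f μ)
    (hf_nonneg : ∀ᵐ x ∂μ, 0 ≤ f x) (g : X → E) :
    ∫ x, g x ∂(μ.withDensity fun x => ENNReal.ofReal (f x)) = ∫ x, f x • g x ∂μ := by
  rw [integral_withDensity_eq_integral_toReal_smul₀ hf.ennreal_ofReal
    (ae_of_all _ fun _ => ENNReal.ofReal_lt_top)]
  refine integral_congr_ae ?_
  filter_upwards [hf_nonneg] with x hx
  rw [ENNReal.toReal_ofReal hx]

theorem integral_withDensity_one_add_eq_integral_smul {g : X → ℝ} (hg : AEMeasurable g μ)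
    (hpos : ∀ᵐ x ∂μ, 0 ≤ 1 + g x) {Φ : X → E} (hΦ : Integrable Φ μ)
    (hgΦ : Integrable (fun x => g x • Φ x) μ) (hmean : ∫ x, Φ x ∂μ = 0) :
    ∫ x, Φ x ∂(μ.withDensity fun x => ENNReal.ofReal (1 + g x)) = ∫ x, g x • Φ x ∂μ := by
  rw [integral_withDensity_ofReal_eq_integral_smul (f := fun x => 1 + g x)
    (aemeasurable_const.add hg) hpos]
  simp_rw [add_smul, one_smul]
  rw [integral_add hΦ hgΦ, hmean, zero_add]

end WithDensity

theorem ContinuousLinearMap.adjoint_apply_eq_integral_smul {X H : Type*} [MeasurableSpace X]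
    {μ : Measure X} [NormedAddCommGroup H] [InnerProductSpace ℝ H] [CompleteSpace H]
    {Φ : X → H} {J : H →L[ℝ] Lp ℝ 2 μ} (hJ : ∀ f : H, (J f : X → ℝ) =ᵐ[μ] fun x => ⟪f, Φ x⟫)
    (u : Lp ℝ 2 μ) (hu : Integrable (fun x => u x • Φ x) μ) :
    J.adjoint u = ∫ x, u x • Φ x ∂μ := by
  refine ext_inner_left ℝ fun f => ?_
  have hpointwise : (fun x => u x * (J f : X → ℝ) x) =ᵐ[μ] fun x => ⟪f, u x • Φ x⟫ := by
    filter_upwards [hJ f] with x hx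
    rw [hx, real_inner_smul_right]
  rw [adjoint_inner_right, L2.inner_def, ← integral_inner hu]
  exact integral_congr_ae hpointwise

section Orthonormal

variable {𝕜 E ι : Type*} [RCLike 𝕜] [NormedAddCommGroup E] [InnerProductSpace 𝕜 E]

open scoped InnerProductSpace

theorem Orthonormal.inner_left_eq_of_hasSum {v : ι → E} (hv : Orthonormal 𝕜 v) {c : ι → 𝕜}
    {w : E} (h : HasSum (fun i => c i • v i) w) (j : ι) : ⟪v j, w⟫_𝕜 = c j := by
  classical
  have hterm : (fun i => innerSL 𝕜 (v j) (c i • v i)) = fun i => if i = j then c j else 0 := by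
    funext i
    rw [innerSL_apply_apply, inner_smul_right, orthonormal_iff_ite.mp hv j i]
    rcases eq_or_ne i j with rfl | hij
    · simp
    · simp [hij, Ne.symm hij]
  have hcoord := h.mapL (innerSL 𝕜 (v j))
  rw [hterm, innerSL_apply_apply] at hcoord
  exact hcoord.unique (hasSum_ite_eq j _)

theorem Orthonormal.summable_inner_smul [CompleteSpace E] {v : ι → E} (hv : Orthonormal 𝕜 v)
    (x : E) : Summable fun i => ⟪v i, x⟫_𝕜 • v i := by
  simpa [LinearIsometry.toSpanSingleton_apply] using
    (hv.orthogonalFamily.summable_iff_norm_sq_summable fun i => ⟪v i, x⟫_𝕜).2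
      (hv.inner_products_summable x)

end Orthonormal

theorem hasSum_eigenvalue_mul_inner_sq {E ι : Type*} [NormedAddCommGroup E]
    [InnerProductSpace ℝ E] [CompleteSpace E] {T : E →L[ℝ] E} {φ : ι → E}
    (hφ : Orthonormal ℝ φ) {l : ι → ℝ} (heig : ∀ i, T (φ i) = l i • φ i)
    (hker : ∀ v, (∀ i, ⟪φ i, v⟫ = 0) → T v = 0) (u : E) :
    HasSum (fun i => l i * ⟪u, φ i⟫ ^ 2) ⟪T u, u⟫ := by
  obtain ⟨w, hw⟩ := hφ.summable_inner_smul u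
  have hTu : T u = T w := by
    refine sub_eq_zero.mp ?_
    rw [← map_sub]
    refine hker _ fun i => ?_
    rw [inner_sub_right, hφ.inner_left_eq_of_hasSum hw i, sub_self]
  have hTw : HasSum (fun i => ⟪φ i, u⟫ • l i • φ i) (T w) := by
    simpa only [map_smul, heig] using hw.mapL T
  have hterm : (fun i => l i * ⟪u, φ i⟫ ^ 2) = fun i => innerSL ℝ u (⟪φ i, u⟫ • l i • φ i) := by
    funext i
    rw [innerSL_apply_apply, inner_smul_right, inner_smul_right, real_inner_comm (φ i) u]
    ring
  rw [hterm, hTu, real_inner_comm, ← innerSL_apply_apply]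
  exact hTw.mapL _

theorem stmt_11_general {X : Type*} [MeasurableSpace X] (P₀ : Measure X) [IsProbabilityMeasure P₀]
    {H : Type*} [NormedAddCommGroup H] [InnerProductSpace ℝ H] [CompleteSpace H]
    (Φ : X → H) (J : H →L[ℝ] Lp ℝ 2 P₀)
    (hJ : ∀ f : H, (J f : X → ℝ) =ᵐ[P₀] fun x => ⟪f, Φ x⟫)
    (u : Lp ℝ 2 P₀)
    (hpos : ∀ᵐ x ∂P₀, 0 ≤ 1 + u x)
    (P : Measure X) (hP : P = P₀.withDensity (fun x => ENNReal.ofReal (1 + u x)))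
    (hint0 : Integrable Φ P₀)
    (hintu : Integrable (fun x => u x • Φ x) P₀)
    (hmean0 : ∫ x, Φ x ∂P₀ = 0)
    {ι : Type*} (φt : ι → Lp ℝ 2 P₀) (hφt : Orthonormal ℝ φt)
    (l : ι → ℝ)
    (heig : ∀ i, (J ∘L J.adjoint) (φt i) = l i • φt i)
    (hspan : ∀ v : Lp ℝ 2 P₀, (∀ i, ⟪φt i, v⟫ = 0) → (J ∘L J.adjoint) v = 0) :
    (∫ x, Φ x ∂P) = J.adjoint u ∧
    ‖∫ x, Φ x ∂P‖ ^ 2 = ⟪(J ∘L J.adjoint) u, u⟫ ∧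
    HasSum (fun i => l i * ⟪u, φt i⟫ ^ 2) (‖∫ x, Φ x ∂P‖ ^ 2) := by
  have hΨ : ∫ x, Φ x ∂P = J.adjoint u := by
    rw [hP, integral_withDensity_one_add_eq_integral_smul (Lp.aestronglyMeasurable u).aemeasurable
      hpos hint0 hintu hmean0, J.adjoint_apply_eq_integral_smul hJ u hintu]
  have hnorm : ‖∫ x, Φ x ∂P‖ ^ 2 = ⟪(J ∘L J.adjoint) u, u⟫ := by
    rw [hΨ, J.adjoint.apply_norm_sq_eq_inner_adjoint_left, ContinuousLinearMap.adjoint_adjoint]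
    rfl
  exact ⟨hΨ, hnorm, hnorm ▸ hasSum_eigenvalue_mul_inner_sq hφt heig hspan u⟩

/-- H an RKHS on X with feature map Φ (Stein kernel K(x,y) = ⟪Φ x, Φ y⟫),
P₀ a probability measure, J : H → L²(P₀) the inclusion f ↦ [⟪f, Φ ·⟫]. If P ≪ P₀ with
dP/dP₀ = 1 + u, u ∈ L²(P₀), and E_{P₀}[Φ X] = 0 in H, then the mean embedding
Ψ_P = ∫ Φ x dP(x) satisfies Ψ_P = J* u, so ‖Ψ_P‖² = ⟨Υ u, u⟩ where Υ = J J*, and if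
(λ_i, φ̃_i) is an eigensystem of Υ spanning the closure of its range, then
‖Ψ_P‖² = Σ_i λ_i ⟨u, φ̃_i⟩². -/
theorem stmt_11 {X : Type*} [MeasurableSpace X] (P₀ : Measure X) [IsProbabilityMeasure P₀]
    {H : Type*} [NormedAddCommGroup H] [InnerProductSpace ℝ H] [CompleteSpace H]
    (Φ : X → H) (J : H →L[ℝ] Lp ℝ 2 P₀)
    (hJ : ∀ f : H, (J f : X → ℝ) =ᵐ[P₀] fun x => ⟪f, Φ x⟫)
    (u : Lp ℝ 2 P₀)
    (hpos : ∀ᵐ x ∂P₀, 0 ≤ 1 + u x)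
    (P : Measure X) (hP : P = P₀.withDensity (fun x => ENNReal.ofReal (1 + u x)))
    (hint0 : Integrable Φ P₀) (hintP : Integrable Φ P)
    (hintu : Integrable (fun x => u x • Φ x) P₀)
    (hmean0 : ∫ x, Φ x ∂P₀ = 0)
    {ι : Type*} (φt : ι → Lp ℝ 2 P₀) (hφt : Orthonormal ℝ φt)
    (l : ι → ℝ) (hl : ∀ i, 0 < l i)
    (heig : ∀ i, (J ∘L J.adjoint) (φt i) = l i • φt i)
    (hspan : ∀ v : Lp ℝ 2 P₀, (∀ i, ⟪φt i, v⟫ = 0) → (J ∘L J.adjoint) v = 0) :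
    (∫ x, Φ x ∂P) = J.adjoint u ∧
    ‖∫ x, Φ x ∂P‖ ^ 2 = ⟪(J ∘L J.adjoint) u, u⟫ ∧
    HasSum (fun i => l i * ⟪u, φt i⟫ ^ 2) (‖∫ x, Φ x ∂P‖ ^ 2) :=
  stmt_11_general P₀ Φ J hJ u hpos P hP hint0 hintu hmean0 φt hφt l heig hspan
end
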